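/- arXiv:2211.08202 — 2 statements merged into one kernel-verified Lean document; each statement's English description precedes it below -/
import Mathlib

section
/- Let n ≥ 2 and z ∈ ℝ³ with 0 ≤ z_i ≤ 1 for all i (so |z|² ≤ 3), and let Δ = (1/(2n), −1/(2n), 0), so |Δ|² = 1/(2n²). If z+Δ and z−Δ are nonzero, then ⟨z+Δ, z−Δ⟩ / (|z+Δ|·|z−Δ|) ≤ 1 − 1/(6n²). -/
open scoped RealInnerProductSpace

set_option maxHeartbeats 1000000

lemma cos_angle_aux (t a b c P Q : ℝ) (ht2 : 2 ≤ t)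
    (ha0 : 0 ≤ a) (ha1 : a ≤ 1) (hb0 : 0 ≤ b) (hb1 : b ≤ 1)
    (hc0 : 0 ≤ c) (hc1 : c ≤ 1) (hP0 : 0 < P) (hQ0 : 0 < Q)
    (hP2 : P^2 = (a + 1/(2*t))^2 + (b - 1/(2*t))^2 + c^2)
    (hQ2 : Q^2 = (a - 1/(2*t))^2 + (b + 1/(2*t))^2 + c^2) :
    (a^2 + b^2 + c^2 - 1/(2*t^2)) / (P * Q) ≤ 1 - 1/(6*t^2) := by
  have ht0 : (0:ℝ) < t := by linarith
  have hε : (0:ℝ) < 1 - 1/(6*t^2) := by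
    have h1 : (1:ℝ)/(6*t^2) ≤ 1/24 := by
      rw [div_le_div_iff₀ (by nlinarith) (by norm_num)]; nlinarith
    linarith
  obtain ⟨d, hd⟩ : ∃ d : ℝ, d = 1/(2*t^2) := ⟨_, rfl⟩
  obtain ⟨S, hS⟩ : ∃ S : ℝ, S = a^2 + b^2 + c^2 := ⟨_, rfl⟩
  have hd0 : 0 < d := by rw [hd]; positivity
  have hd8 : d ≤ 1/8 := by
    rw [hd, div_le_div_iff₀ (by nlinarith) (by norm_num : (0:ℝ) < 8)]; nlinarith
  have hS3 : S ≤ 3 := by rw [hS]; nlinarith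
  have hS0 : 0 ≤ S := by rw [hS]; positivity
  have hε' : 1 - 1/(6*t^2) = 1 - d/3 := by rw [hd]; ring
  have hnum : a^2 + b^2 + c^2 - 1/(2*t^2) = S - d := by rw [hS, hd]
  rw [hnum, hε']
  by_cases hpos : S - d ≤ 0
  · calc (S - d) / (P * Q) ≤ 0 :=
        div_nonpos_of_nonpos_of_nonneg hpos (by positivity)
      _ ≤ 1 - d/3 := by rw [← hε']; linarith
  · push_neg at hpos
    rw [div_le_iff₀ (by positivity)]
    have hSd : d < S := by linarith
    have hPQ : (P * Q)^2 = (S + d)^2 - ((a-b)/t)^2 := by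
      rw [mul_pow, hP2, hQ2, hS, hd]
      field_simp
      ring
    have hab : ((a-b)/t)^2 ≤ 2*d*S := by
      have hk : (a-b)^2 ≤ a^2+b^2+c^2 := by nlinarith [mul_nonneg ha0 hb0, sq_nonneg c]
      rw [hd, hS, div_pow, div_le_iff₀ (by positivity : (0:ℝ) < t^2)]
      have h2 : (2:ℝ) * (1/(2*t^2)) * (a^2+b^2+c^2) * t^2 = a^2+b^2+c^2 := by
        field_simp
      linarith
    have hprod : S^2 + d^2 ≤ (P*Q)^2 := by rw [hPQ]; nlinarith
    have main : (S - d)^2 ≤ (1 - d/3)^2 * (S^2 + d^2) := by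
      nlinarith [mul_nonneg (mul_nonneg hd0.le (sub_nonneg.mpr hSd.le)) (sub_nonneg.mpr hS3),
        sq_nonneg (S - d), mul_nonneg hd0.le (sq_nonneg (S-3)),
        mul_nonneg (mul_nonneg hd0.le hd0.le) (sub_nonneg.mpr hSd.le)]
    have key : (S - d)^2 ≤ ((1 - d/3) * (P * Q))^2 := by
      rw [mul_pow]
      calc (S - d)^2 ≤ (1 - d/3)^2 * (S^2 + d^2) := main
        _ ≤ (1 - d/3)^2 * (P*Q)^2 := by
            exact mul_le_mul_of_nonneg_left hprod (sq_nonneg _)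
    have hRHS : 0 ≤ (1 - d/3) * (P * Q) := by
      apply mul_nonneg (by linarith) (by positivity)
    have hs := Real.sqrt_le_sqrt key
    rwa [Real.sqrt_sq hpos.le, Real.sqrt_sq hRHS] at hs

/-- Cosine of the angle between the normalized values of two incomparable
solutions is at most `1 − 1/(6n²)`. -/
theorem cos_angle_le_of_distinct (n : ℕ) (hn : 2 ≤ n)
    (z Δ : EuclideanSpace ℝ (Fin 3))
    (hz : ∀ i, 0 ≤ z i ∧ z i ≤ 1)
    (hΔ0 : Δ 0 = 1 / (2 * n)) (hΔ1 : Δ 1 = -(1 / (2 * n))) (hΔ2 : Δ 2 = 0)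
    (h₁ : z + Δ ≠ 0) (h₂ : z - Δ ≠ 0) :
    ⟪z + Δ, z - Δ⟫ / (‖z + Δ‖ * ‖z - Δ‖) ≤ 1 - 1 / (6 * n ^ 2) := by
  have ht2 : (2:ℝ) ≤ (n:ℝ) := by exact_mod_cast hn
  have ht0 : (0:ℝ) < (n:ℝ) := by linarith
  obtain ⟨ha0, ha1⟩ := hz 0
  obtain ⟨hb0, hb1⟩ := hz 1
  obtain ⟨hc0, hc1⟩ := hz 2
  have hP0 : 0 < ‖z + Δ‖ := norm_pos_iff.mpr h₁
  have hQ0 : 0 < ‖z - Δ‖ := norm_pos_iff.mpr h₂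
  have hip : ⟪z + Δ, z - Δ⟫ = z 0^2 + z 1^2 + z 2^2 - 1/(2*(n:ℝ)^2) := by
    simp only [PiLp.inner_apply, Fin.sum_univ_three, PiLp.add_apply, PiLp.sub_apply,
      RCLike.inner_apply, conj_trivial, hΔ0, hΔ1, hΔ2]
    field_simp
    ring
  have hP2 : ‖z + Δ‖^2 = (z 0 + 1/(2*(n:ℝ)))^2 + (z 1 - 1/(2*(n:ℝ)))^2 + z 2^2 := by
    rw [← real_inner_self_eq_norm_sq]
    simp only [PiLp.inner_apply, Fin.sum_univ_three, PiLp.add_apply,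
      RCLike.inner_apply, conj_trivial, hΔ0, hΔ1, hΔ2]
    ring
  have hQ2 : ‖z - Δ‖^2 = (z 0 - 1/(2*(n:ℝ)))^2 + (z 1 + 1/(2*(n:ℝ)))^2 + z 2^2 := by
    rw [← real_inner_self_eq_norm_sq]
    simp only [PiLp.inner_apply, Fin.sum_univ_three, PiLp.sub_apply,
      RCLike.inner_apply, conj_trivial, hΔ0, hΔ1, hΔ2]
    ring
  rw [hip]
  exact cos_angle_aux (n:ℝ) (z 0) (z 1) (z 2) ‖z + Δ‖ ‖z - Δ‖ ht2
    ha0 ha1 hb0 hb1 hc0 hc1 hP0 hQ0 hP2 hQ2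
end

section
/- For all real n ≥ 2 and all real p ≥ 21n: arccos(1 − 1/(6n²)) > 2·arccos(1 − 18/p²). -/
/-!
With `θ = arccos (1 - a)` the double-angle formula gives `cos 2θ = 1 - 4a + 2a² ≥ 1 - 4a`,
so `2θ < arccos (1 - b)` as soon as `4a < b`. For `a = 18/p²` and `b = 1/(6n²)` this is
`432 n² < p²`, which holds for `p ≥ 21n` since `21² = 441`.
-/

open Real

namespace Real

theorem two_mul_arccos {x : ℝ} (hx₀ : 0 ≤ x) (hx₁ : x ≤ 1) :
    2 * arccos x = arccos (2 * x ^ 2 - 1) := by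
  refine (arccos_eq_of_eq_cos (by linarith [arccos_nonneg x]) ?_ ?_).symm
  · linarith [arccos_le_pi_div_two.mpr hx₀]
  · rw [cos_two_mul, cos_arccos (by linarith) hx₁]

theorem two_mul_arccos_one_sub_lt {a b : ℝ} (ha₀ : 0 ≤ a) (ha₁ : a ≤ 1) (hab : 4 * a < b)
    (hb : b ≤ 2) : 2 * arccos (1 - a) < arccos (1 - b) := by
  rw [two_mul_arccos (by linarith) (by linarith)]
  exact arccos_lt_arccos (by linarith) (by nlinarith) (by nlinarith)

end Real

/-- For `n ≥ 2` and `p ≥ 21n`: `arccos(1 − 1/(6n²)) > 2·arccos(1 − 18/p²)`. -/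
theorem arccos_ineq (n p : ℝ) (hn : 2 ≤ n) (hp : 21 * n ≤ p) :
    2 * Real.arccos (1 - 18 / p ^ 2) < Real.arccos (1 - 1 / (6 * n ^ 2)) := by
  have hn₀ : 0 < n := by linarith
  have hp₀ : 0 < p := by linarith
  have hnp : 441 * n ^ 2 ≤ p ^ 2 := by nlinarith
  apply two_mul_arccos_one_sub_lt (by positivity)
  · rw [div_le_one (by positivity)]
    nlinarith
  · rw [← mul_div_assoc, div_lt_div_iff₀ (by positivity) (by positivity)]
    nlinarith
  · rw [div_le_iff₀ (by positivity)]
    nlinarith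
end
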